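/- Let θ ∈ (0, π/2). For every u ∈ C_0^∞(Ω_θ; ℂ) one has ∫_{Ω_θ} (|∂_s u|² + |∂_t u|² − |u|²/(4ρ²)) ds dt − ∫_{Ω_θ} |u|² ds dt ≥ ∫_{T_θ} f(t) |u|² ds dt, where ρ = s + t cot θ, f(t) = π²/(π − t/4)² − 1, and T_θ = {(s,t) ∈ Ω_θ : s < −ρ₀(t)/2} with ρ₀(t) = (t/2) cot θ. -/

import Mathlib

open Real MeasureTheory

noncomputable section

/-- The half-strip with a corner `Ω_θ`. -/
def OmegaT (θ : ℝ) : Set (ℝ × ℝ) :=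
  {p | 0 < p.2 ∧ p.2 < π ∧ -p.2 * Real.cot θ < p.1}

/-- The triangle `T_θ = {(s,t) ∈ Ω_θ : s < -ρ₀(t)/2}` with `ρ₀(t) = (t/2) cot θ`. -/
def TriT (θ : ℝ) : Set (ℝ × ℝ) :=
  {p ∈ OmegaT θ | p.1 < -(p.2 / 2 * Real.cot θ) / 2}

lemma norm_sq_complex (z : ℂ) : ‖z‖ ^ 2 = z.re ^ 2 + z.im ^ 2 := by
  rw [Complex.sq_norm, Complex.normSq_apply]; ring

lemma key1d (v v' : ℝ → ℂ) (g g' : ℝ → ℝ) (c d : ℝ) (hcd : c ≤ d)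
    (hv : ∀ x, HasDerivAt v (v' x) x) (hv'c : Continuous v')
    (hg : ∀ x ∈ Set.uIcc c d, HasDerivAt g (g' x) x)
    (hgc : ContinuousOn g (Set.uIcc c d)) (hg'c : ContinuousOn g' (Set.uIcc c d))
    (hvc0 : v c = 0) (hvd0 : v d = 0) :
    ∫ x in c..d, (-(g' x + g x ^ 2)) * ‖v x‖ ^ 2 ≤ ∫ x in c..d, ‖v' x‖ ^ 2 := by
  have hvcont : Continuous v := by
    have : Differentiable ℝ v := fun x => (hv x).differentiableAt
    exact this.continuous
  set N : ℝ → ℝ := fun x => ‖v x‖ ^ 2 with hN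
  set N' : ℝ → ℝ := fun x => 2 * ((v x).re * (v' x).re + (v x).im * (v' x).im) with hN'
  have hNd : ∀ x, HasDerivAt N (N' x) x := by
    intro x
    have ha : HasDerivAt (fun y => (v y).re) ((v' x).re) x :=
      (Complex.reCLM.hasFDerivAt.comp_hasDerivAt x (hv x))
    have hb : HasDerivAt (fun y => (v y).im) ((v' x).im) x :=
      (Complex.imCLM.hasFDerivAt.comp_hasDerivAt x (hv x))
    have h12 : HasDerivAt (fun y => (v y).re ^ 2 + (v y).im ^ 2)
        (2 * (v x).re * (v' x).re + 2 * (v x).im * (v' x).im) x := by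
      have h1 := (ha.fun_pow 2)
      have h2 := (hb.fun_pow 2)
      exact (h1.add h2).congr_deriv (by simp)
    have heq : N = fun y => (v y).re ^ 2 + (v y).im ^ 2 := by
      funext y; exact norm_sq_complex (v y)
    rw [heq, hN']
    convert h12 using 1; ring
  have hNcont : Continuous N := (hvcont.norm.pow 2)
  have hN'cont : Continuous N' := by fun_prop
  -- ∫ (g' N + g N') = 0
  have hparts : ∫ x in c..d, (g' x * N x + g x * N' x) = 0 := by
    have hd : ∀ x ∈ Set.uIcc c d, HasDerivAt (fun y => g y * N y) (g' x * N x + g x * N' x) x :=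
      fun x hx => (hg x hx).mul (hNd x)
    have hint : IntervalIntegrable (fun x => g' x * N x + g x * N' x) volume c d :=
      ((hg'c.mul hNcont.continuousOn).add (hgc.mul hN'cont.continuousOn)).intervalIntegrable
    rw [intervalIntegral.integral_eq_sub_of_hasDerivAt hd hint]
    simp [hN, hvc0, hvd0]
  have hpt : ∀ x, (-(g' x + g x ^ 2)) * ‖v x‖ ^ 2
      = ‖v' x‖ ^ 2 - ‖v' x - g x • v x‖ ^ 2 - (g' x * N x + g x * N' x) := by
    intro x
    simp only [norm_sq_complex, hN, hN', Complex.sub_re, Complex.sub_im,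
      Complex.real_smul, Complex.mul_re, Complex.mul_im, Complex.ofReal_re, Complex.ofReal_im]
    ring
  have hInt1 : IntervalIntegrable (fun x => ‖v' x - g x • v x‖ ^ 2) volume c d :=
    ((hv'c.continuousOn.sub (hgc.smul hvcont.continuousOn)).norm.pow 2).intervalIntegrable
  have hInt2 : IntervalIntegrable (fun x => ‖v' x‖ ^ 2) volume c d :=
    ((hv'c.norm.pow 2).continuousOn).intervalIntegrable
  have hInt3 : IntervalIntegrable (fun x => g' x * N x + g x * N' x) volume c d :=
    ((hg'c.mul hNcont.continuousOn).add (hgc.mul hN'cont.continuousOn)).intervalIntegrable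
  have hcongr : ∫ x in c..d, (-(g' x + g x ^ 2)) * ‖v x‖ ^ 2
      = (∫ x in c..d, (‖v' x‖ ^ 2 - ‖v' x - g x • v x‖ ^ 2))
        - ∫ x in c..d, (g' x * N x + g x * N' x) := by
    rw [← intervalIntegral.integral_sub (hInt2.sub hInt1) hInt3]
    exact intervalIntegral.integral_congr (fun x _ => hpt x)
  rw [hcongr, hparts, intervalIntegral.integral_sub hInt2 hInt1, sub_zero]
  have : 0 ≤ ∫ x in c..d, ‖v' x - g x • v x‖ ^ 2 :=
    intervalIntegral.integral_nonneg hcd (fun u _ => by positivity)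
  linarith

lemma deriv_zero_of_nmem_tsupport {v v' : ℝ → ℂ} (hv : ∀ x, HasDerivAt v (v' x) x)
    {x : ℝ} (hx : x ∉ tsupport v) : v' x = 0 := by
  have hev : v =ᶠ[nhds x] (fun _ => (0:ℂ)) := by
    filter_upwards [(isClosed_tsupport v).isOpen_compl.mem_nhds hx] with y hy
    exact image_eq_zero_of_notMem_tsupport hy
  exact (hv x).unique ((hasDerivAt_const x (0:ℂ)).congr_of_eventuallyEq hev)

lemma integral_eq_interval {f : ℝ → ℝ} {c d : ℝ} (hcd : c ≤ d)
    (h0 : ∀ x ∉ Set.Ioc c d, f x = 0) : ∫ x, f x = ∫ x in c..d, f x := by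
  rw [intervalIntegral.integral_of_le hcd,
    MeasureTheory.setIntegral_eq_integral_of_forall_compl_eq_zero h0]

lemma hardy1d (a : ℝ) (v v' : ℝ → ℂ) (hv : ∀ x, HasDerivAt v (v' x) x)
    (hv'c : Continuous v') (hcs : HasCompactSupport v) (hsupp : tsupport v ⊆ Set.Ioi a) :
    ∫ x, ‖v x‖ ^ 2 / (4 * (x - a) ^ 2) ≤ ∫ x, ‖v' x‖ ^ 2 := by
  rcases Set.eq_empty_or_nonempty (tsupport v) with hemp | hne
  · have hv0 : ∀ x, v x = 0 := fun x =>
      image_eq_zero_of_notMem_tsupport (by rw [hemp]; exact Set.notMem_empty x)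
    have hv'0 : ∀ x, v' x = 0 := fun x =>
      deriv_zero_of_nmem_tsupport hv (by rw [hemp]; exact Set.notMem_empty x)
    have h1 : ∫ x, ‖v x‖ ^ 2 / (4 * (x - a) ^ 2) = 0 := by
      have : (fun x => ‖v x‖ ^ 2 / (4 * (x - a) ^ 2)) = fun _ => (0:ℝ) := by
        funext x; rw [hv0 x]; simp
      rw [this, integral_zero]
    have h2 : 0 ≤ ∫ x, ‖v' x‖ ^ 2 := integral_nonneg (fun x => by positivity)
    linarith
  · -- choose enclosing interval
    have hK : IsCompact (tsupport v) := hcs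
    have hIn : sInf (tsupport v) ∈ tsupport v := hK.sInf_mem hne
    have hSn : sSup (tsupport v) ∈ tsupport v := hK.sSup_mem hne
    set c := (a + sInf (tsupport v)) / 2 with hc
    set d := sSup (tsupport v) + 1 with hd
    have hac : a < c := by
      have := hsupp hIn; simp only [Set.mem_Ioi] at this; rw [hc]; linarith
    have hcd : c ≤ d := by
      have h1 : sInf (tsupport v) ≤ sSup (tsupport v) := csInf_le_csSup hne hK.bddBelow hK.bddAbove
      have := hsupp hIn; simp only [Set.mem_Ioi] at this
      rw [hc, hd]; linarith
    have hencl : tsupport v ⊆ Set.Ioo c d := by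
      intro x hx
      have h1 : sInf (tsupport v) ≤ x := csInf_le hK.bddBelow hx
      have h2 : x ≤ sSup (tsupport v) := le_csSup hK.bddAbove hx
      have := hsupp hIn; simp only [Set.mem_Ioi] at this
      exact ⟨by rw [hc]; linarith, by rw [hd]; linarith⟩
    have hvout : ∀ x ∉ Set.Ioc c d, v x = 0 := fun x hx =>
      image_eq_zero_of_notMem_tsupport (fun hmem => hx (Set.Ioo_subset_Ioc_self (hencl hmem)))
    have hv'out : ∀ x ∉ Set.Ioc c d, v' x = 0 := fun x hx =>
      deriv_zero_of_nmem_tsupport hv (fun hmem => hx (Set.Ioo_subset_Ioc_self (hencl hmem)))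
    have hvc0 : v c = 0 :=
      image_eq_zero_of_notMem_tsupport (fun h => (lt_irrefl c (hencl h).1))
    have hvd0 : v d = 0 :=
      image_eq_zero_of_notMem_tsupport (fun h => (lt_irrefl d (hencl h).2))
    rw [integral_eq_interval hcd (fun x hx => by rw [hvout x hx]; simp),
      integral_eq_interval hcd (fun x hx => by rw [hv'out x hx]; simp)]
    -- key1d with g = (2(x-a))⁻¹
    set g : ℝ → ℝ := fun x => (2 * (x - a))⁻¹ with hg
    set g' : ℝ → ℝ := fun x => -2 / (2 * (x - a)) ^ 2 with hg'
    have hne0 : ∀ x ∈ Set.uIcc c d, 2 * (x - a) ≠ 0 := by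
      intro x hx
      rw [Set.uIcc_of_le hcd] at hx
      have h1 : a < x := lt_of_lt_of_le hac hx.1
      have h2 : (0:ℝ) < 2 * (x - a) := by linarith
      exact h2.ne'
    have hgd : ∀ x ∈ Set.uIcc c d, HasDerivAt g (g' x) x := by
      intro x hx
      have h1 : HasDerivAt (fun y => 2 * (y - a)) 2 x := by
        simpa using ((hasDerivAt_id x).sub_const a).const_mul 2
      exact h1.inv (hne0 x hx)
    have hgcont : ContinuousOn g (Set.uIcc c d) :=
      ((continuous_const.mul (continuous_id.sub continuous_const)).continuousOn).inv₀ hne0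
    have hg'cont : ContinuousOn g' (Set.uIcc c d) := by
      apply ContinuousOn.div continuousOn_const
      · exact ((continuous_const.mul (continuous_id.sub continuous_const)).pow 2).continuousOn
      · intro x hx; exact pow_ne_zero 2 (hne0 x hx)
    have hkey := key1d v v' g g' c d hcd hv hv'c hgd hgcont hg'cont hvc0 hvd0
    have hcongr : ∫ x in c..d, ‖v x‖ ^ 2 / (4 * (x - a) ^ 2)
        = ∫ x in c..d, (-(g' x + g x ^ 2)) * ‖v x‖ ^ 2 := by
      apply intervalIntegral.integral_congr
      intro x hx
      have h0 := hne0 x hx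
      have hxa : x - a ≠ 0 := by intro h; apply h0; rw [h]; ring
      rw [hg, hg']
      field_simp
      ring
    rw [hcongr]
    exact hkey

lemma poincare1d (a b : ℝ) (hab : a < b) (v v' : ℝ → ℂ) (hv : ∀ x, HasDerivAt v (v' x) x)
    (hv'c : Continuous v') (hcs : HasCompactSupport v) (hsupp : tsupport v ⊆ Set.Ioo a b) :
    (π / (b - a)) ^ 2 * ∫ x, ‖v x‖ ^ 2 ≤ ∫ x, ‖v' x‖ ^ 2 := by
  rcases Set.eq_empty_or_nonempty (tsupport v) with hemp | hne
  · have hv0 : ∀ x, v x = 0 := fun x =>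
      image_eq_zero_of_notMem_tsupport (by rw [hemp]; exact Set.notMem_empty x)
    have h1 : ∫ x, ‖v x‖ ^ 2 = 0 := by
      have : (fun x => ‖v x‖ ^ 2) = fun _ => (0:ℝ) := by funext x; rw [hv0 x]; simp
      rw [this, integral_zero]
    have h2 : 0 ≤ ∫ x, ‖v' x‖ ^ 2 := integral_nonneg (fun x => by positivity)
    rw [h1, mul_zero]; exact h2
  · have hK : IsCompact (tsupport v) := hcs
    have hIn : sInf (tsupport v) ∈ tsupport v := hK.sInf_mem hne
    have hSn : sSup (tsupport v) ∈ tsupport v := hK.sSup_mem hne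
    have haI : a < sInf (tsupport v) := (hsupp hIn).1
    have hSb : sSup (tsupport v) < b := (hsupp hSn).2
    set c := (a + sInf (tsupport v)) / 2 with hc
    set d := (sSup (tsupport v) + b) / 2 with hd
    have hIS : sInf (tsupport v) ≤ sSup (tsupport v) := csInf_le_csSup hne hK.bddBelow hK.bddAbove
    have hac : a < c := by rw [hc]; linarith
    have hdb : d < b := by rw [hd]; linarith
    have hcd : c ≤ d := by rw [hc, hd]; linarith
    have hencl : tsupport v ⊆ Set.Ioo c d := by
      intro x hx
      have h1 : sInf (tsupport v) ≤ x := csInf_le hK.bddBelow hx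
      have h2 : x ≤ sSup (tsupport v) := le_csSup hK.bddAbove hx
      exact ⟨by rw [hc]; linarith, by rw [hd]; linarith⟩
    have hvout : ∀ x ∉ Set.Ioc c d, v x = 0 := fun x hx =>
      image_eq_zero_of_notMem_tsupport (fun hmem => hx (Set.Ioo_subset_Ioc_self (hencl hmem)))
    have hv'out : ∀ x ∉ Set.Ioc c d, v' x = 0 := fun x hx =>
      deriv_zero_of_nmem_tsupport hv (fun hmem => hx (Set.Ioo_subset_Ioc_self (hencl hmem)))
    have hvc0 : v c = 0 :=
      image_eq_zero_of_notMem_tsupport (fun h => (lt_irrefl c (hencl h).1))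
    have hvd0 : v d = 0 :=
      image_eq_zero_of_notMem_tsupport (fun h => (lt_irrefl d (hencl h).2))
    set k := π / (b - a) with hk
    have hba : (0:ℝ) < b - a := by linarith
    have hkpos : 0 < k := by rw [hk]; positivity
    have hconv1 : ∫ x, ‖v x‖ ^ 2 = ∫ x in c..d, ‖v x‖ ^ 2 :=
      integral_eq_interval hcd (fun x hx => by rw [hvout x hx]; simp)
    have hconv2 : ∫ x, ‖v' x‖ ^ 2 = ∫ x in c..d, ‖v' x‖ ^ 2 :=
      integral_eq_interval hcd (fun x hx => by rw [hv'out x hx]; simp)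
    rw [hconv1, hconv2]
    -- g = k cos(k(x-a)) / sin(k(x-a))
    set φ : ℝ → ℝ := fun x => Real.sin (k * (x - a)) with hφ
    set g : ℝ → ℝ := fun x => k * Real.cos (k * (x - a)) / φ x with hg
    set g' : ℝ → ℝ := fun x => -(k ^ 2) / (φ x) ^ 2 with hg'
    have hφpos : ∀ x ∈ Set.uIcc c d, 0 < φ x := by
      intro x hx
      rw [Set.uIcc_of_le hcd] at hx
      have hxa : a < x := lt_of_lt_of_le hac hx.1
      have hxb : x < b := lt_of_le_of_lt hx.2 hdb
      apply Real.sin_pos_of_pos_of_lt_pi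
      · have hx0 : (0:ℝ) < x - a := by linarith
        exact mul_pos hkpos hx0
      · have : k * (x - a) < k * (b - a) := by
          apply mul_lt_mul_of_pos_left _ hkpos; linarith
        rw [hk] at this
        calc k * (x - a) < π / (b - a) * (b - a) := this
          _ = π := by field_simp
    have hφd : ∀ x, HasDerivAt φ (k * Real.cos (k * (x - a))) x := by
      intro x
      have h1 : HasDerivAt (fun y => k * (y - a)) k x := by
        simpa using ((hasDerivAt_id x).sub_const a).const_mul k
      exact ((Real.hasDerivAt_sin (k * (x - a))).comp x h1).congr_deriv (mul_comm _ _)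
    have hψd : ∀ x, HasDerivAt (fun y => k * Real.cos (k * (y - a))) (-(k ^ 2) * φ x) x := by
      intro x
      have h1 : HasDerivAt (fun y => k * (y - a)) k x := by
        simpa using ((hasDerivAt_id x).sub_const a).const_mul k
      have := ((Real.hasDerivAt_cos (k * (x - a))).comp x h1).const_mul k
      exact this.congr_deriv (by rw [hφ]; ring)
    have hgd : ∀ x ∈ Set.uIcc c d, HasDerivAt g (g' x) x := by
      intro x hx
      have hne := (hφpos x hx).ne'
      have := (hψd x).div (hφd x) hne
      refine this.congr_deriv ?_
      rw [hg', hφ]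
      have hpyth : Real.sin (k * (x - a)) ^ 2 + Real.cos (k * (x - a)) ^ 2 = 1 :=
        Real.sin_sq_add_cos_sq _
      show (-k ^ 2 * Real.sin (k * (x - a)) * Real.sin (k * (x - a))
        - k * Real.cos (k * (x - a)) * (k * Real.cos (k * (x - a)))) / Real.sin (k * (x - a)) ^ 2
        = -k ^ 2 / Real.sin (k * (x - a)) ^ 2
      congr 1
      linear_combination (-k ^ 2) * hpyth
    have hφcont : Continuous φ := by fun_prop
    have hgcont : ContinuousOn g (Set.uIcc c d) := by
      apply ContinuousOn.div
      · fun_prop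
      · exact hφcont.continuousOn
      · intro x hx; exact (hφpos x hx).ne'
    have hg'cont : ContinuousOn g' (Set.uIcc c d) := by
      apply ContinuousOn.div continuousOn_const (by fun_prop)
      intro x hx; exact pow_ne_zero 2 (hφpos x hx).ne'
    have hkey := key1d v v' g g' c d hcd hv hv'c hgd hgcont hg'cont hvc0 hvd0
    have hcongr : ∫ x in c..d, (-(g' x + g x ^ 2)) * ‖v x‖ ^ 2
        = ∫ x in c..d, k ^ 2 * ‖v x‖ ^ 2 := by
      apply intervalIntegral.integral_congr
      intro x hx
      have hne := (hφpos x hx).ne'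
      have hpyth : Real.sin (k * (x - a)) ^ 2 + Real.cos (k * (x - a)) ^ 2 = 1 :=
        Real.sin_sq_add_cos_sq _
      have hw : -(g' x + g x ^ 2) = k ^ 2 := by
        rw [hg', hg, hφ]
        rw [hφ] at hne
        have hs : Real.sin (k * (x - a)) ≠ 0 := hne
        show -(-k ^ 2 / Real.sin (k * (x - a)) ^ 2 + (k * Real.cos (k * (x - a)) / Real.sin (k * (x - a))) ^ 2) = k ^ 2
        rw [div_pow (k * Real.cos (k * (x - a))), mul_pow, ← add_div, ← neg_div, div_eq_iff (pow_ne_zero 2 hs)]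
        linear_combination (-k ^ 2) * hpyth
      show -(g' x + g x ^ 2) * ‖v x‖ ^ 2 = k ^ 2 * ‖v x‖ ^ 2
      rw [hw]
    rw [hcongr, intervalIntegral.integral_const_mul] at hkey
    exact hkey
-- auxiliary 2D facts
lemma omegaT_open (θ : ℝ) : IsOpen (OmegaT θ) := by
  have h1 : OmegaT θ = {p : ℝ × ℝ | 0 < p.2} ∩ ({p : ℝ × ℝ | p.2 < π} ∩ {p : ℝ × ℝ | -p.2 * Real.cot θ < p.1}) := by
    ext p; simp [OmegaT, Set.mem_setOf_eq, Set.mem_inter_iff, and_assoc]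
  rw [h1]
  exact (isOpen_lt continuous_const continuous_snd).inter
    ((isOpen_lt continuous_snd continuous_const).inter
      (isOpen_lt (continuous_snd.neg.mul continuous_const) continuous_fst))

lemma triT_open (θ : ℝ) : IsOpen (TriT θ) := by
  have h1 : TriT θ = OmegaT θ ∩ {p : ℝ × ℝ | p.1 < -(p.2 / 2 * Real.cot θ) / 2} := rfl
  rw [h1]
  exact (omegaT_open θ).inter
    (isOpen_lt continuous_fst (((continuous_snd.div_const 2).mul continuous_const).neg.div_const 2))

section Main

variable {θ : ℝ} (hθ : θ ∈ Set.Ioo 0 (π / 2)) {u : ℝ × ℝ → ℂ}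
  (hu : ContDiff ℝ (⊤ : ℕ∞) u) (hcs : HasCompactSupport u) (hsub : tsupport u ⊆ OmegaT θ)

include hθ hu hcs hsub

lemma part1 :
    0 ≤ ∫ p : ℝ × ℝ, (‖fderiv ℝ u p (1, 0)‖ ^ 2
        - ‖u p‖ ^ 2 / (4 * (p.1 + p.2 * Real.cot θ) ^ 2)) := by
  have hucont : Continuous u := hu.continuous
  have hdiff : Differentiable ℝ u := hu.differentiable (by simp)
  have hfdcont : Continuous (fderiv ℝ u) := hu.continuous_fderiv (by simp)
  have hu0 : ∀ p ∉ tsupport u, u p = 0 := fun p hp => image_eq_zero_of_notMem_tsupport hp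
  have hfd0 : ∀ p ∉ tsupport u, fderiv ℝ u p = 0 := by
    intro p hp
    by_contra h
    exact hp (support_fderiv_subset ℝ (Function.mem_support.2 h))
  set A : ℝ × ℝ → ℝ := fun p => ‖fderiv ℝ u p (1, 0)‖ ^ 2 with hA
  set C : ℝ × ℝ → ℝ := fun p => ‖u p‖ ^ 2 / (4 * (p.1 + p.2 * Real.cot θ) ^ 2) with hC
  have hAcont : Continuous A := by
    have : Continuous (fun p => fderiv ℝ u p (1, 0)) :=
      (ContinuousLinearMap.apply ℝ ℂ ((1:ℝ), (0:ℝ))).continuous.comp hfdcont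
    exact this.norm.pow 2
  have hCcont : Continuous C := by
    rw [continuous_iff_continuousAt]
    intro p
    by_cases hp : p ∈ tsupport u
    · have hΩ := hsub hp
      have hρ : 0 < p.1 + p.2 * Real.cot θ := by
        have := hΩ.2.2; nlinarith [hΩ.2.2]
      exact ((hucont.norm.pow 2).continuousAt).div
        (by fun_prop) (by positivity)
    · have hev : C =ᶠ[nhds p] (fun _ => (0:ℝ)) := by
        filter_upwards [(isClosed_tsupport u).isOpen_compl.mem_nhds hp] with q hq
        rw [hC]; simp only; rw [hu0 q hq]; simp
      exact ContinuousAt.congr continuousAt_const hev.symm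
  have hcsA : HasCompactSupport A := by
    apply HasCompactSupport.intro hcs
    intro p hp; rw [hA]; simp only; rw [hfd0 p hp]; simp
  have hcsC : HasCompactSupport C := by
    apply HasCompactSupport.intro hcs
    intro p hp; rw [hC]; simp only; rw [hu0 p hp]; simp
  have hintA : Integrable A := hAcont.integrable_of_hasCompactSupport hcsA
  have hintC : Integrable C := hCcont.integrable_of_hasCompactSupport hcsC
  have hint : Integrable (fun p : ℝ × ℝ => A p - C p) := hintA.sub hintC
  have hswap : ∫ p : ℝ × ℝ, (A p - C p)
      = ∫ t : ℝ, ∫ s : ℝ, (A (s, t) - C (s, t)) := by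
    exact MeasureTheory.integral_prod_symm _ hint
  rw [show (∫ p : ℝ × ℝ, (‖fderiv ℝ u p (1, 0)‖ ^ 2
      - ‖u p‖ ^ 2 / (4 * (p.1 + p.2 * Real.cot θ) ^ 2))) = ∫ p : ℝ × ℝ, (A p - C p) from rfl]
  rw [hswap]
  apply integral_nonneg
  intro t
  simp only [Pi.zero_apply]
  -- slice functions
  set v : ℝ → ℂ := fun s => u (s, t) with hv
  set v' : ℝ → ℂ := fun s => fderiv ℝ u (s, t) (1, 0) with hv'
  have hvd : ∀ s, HasDerivAt v (v' s) s := by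
    intro s
    have hline : HasDerivAt (fun s : ℝ => ((s, t) : ℝ × ℝ)) ((1:ℝ), (0:ℝ)) s :=
      (hasDerivAt_id s).prodMk (hasDerivAt_const s t)
    exact (hdiff (s, t)).hasFDerivAt.comp_hasDerivAt s hline
  have hv'c : Continuous v' := by
    have h1 : Continuous (fun s : ℝ => fderiv ℝ u (s, t)) :=
      hfdcont.comp (continuous_id.prodMk continuous_const)
    exact ((ContinuousLinearMap.apply ℝ ℂ ((1:ℝ), (0:ℝ))).continuous.comp h1)
  have hKs : IsCompact (Prod.fst '' tsupport u) := hcs.image continuous_fst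
  have hcsv : HasCompactSupport v := by
    apply HasCompactSupport.intro hKs
    intro s hs
    exact hu0 (s, t) (fun hmem => hs ⟨(s, t), hmem, rfl⟩)
  have hsupv : tsupport v ⊆ Set.Ioi (-t * Real.cot θ) := by
    have h1 : tsupport v ⊆ {s : ℝ | (s, t) ∈ tsupport u} := by
      apply closure_minimal _ (IsClosed.preimage (continuous_id.prodMk continuous_const)
        (isClosed_tsupport u))
      intro s hs
      simp only [Function.mem_support] at hs
      exact subset_tsupport _ hs
    intro s hs
    have h2 := hsub (h1 hs)
    exact h2.2.2
  have hhardy := hardy1d (-t * Real.cot θ) v v' hvd hv'c hcsv hsupv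
  have hCsl : (fun s => C (s, t)) = fun s => ‖v s‖ ^ 2 / (4 * (s - (-t * Real.cot θ)) ^ 2) := by
    funext s
    rw [hC, hv]
    simp only
    rw [show 4 * (s + t * Real.cot θ) ^ 2 = 4 * (s - (-t * Real.cot θ)) ^ 2 by ring]
  have hintAs : Integrable (fun s => A (s, t)) := by
    apply Continuous.integrable_of_hasCompactSupport
    · exact hAcont.comp (continuous_id.prodMk continuous_const)
    · apply HasCompactSupport.intro hKs
      intro s hs
      have : (s, t) ∉ tsupport u := fun hmem => hs ⟨(s, t), hmem, rfl⟩
      rw [hA]; simp only; rw [hfd0 _ this]; simp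
  have hintCs : Integrable (fun s => C (s, t)) := by
    apply Continuous.integrable_of_hasCompactSupport
    · exact hCcont.comp (continuous_id.prodMk continuous_const)
    · apply HasCompactSupport.intro hKs
      intro s hs
      have : (s, t) ∉ tsupport u := fun hmem => hs ⟨(s, t), hmem, rfl⟩
      rw [hC]; simp only; rw [hu0 _ this]; simp
  rw [integral_sub hintAs hintCs]
  have hAeq : ∫ s, A (s, t) = ∫ s, ‖v' s‖ ^ 2 := rfl
  rw [hAeq, hCsl]
  linarith [hhardy]

end Main
section Main2

variable {θ : ℝ} (hθ : θ ∈ Set.Ioo 0 (π / 2)) {u : ℝ × ℝ → ℂ}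
  (hu : ContDiff ℝ (⊤ : ℕ∞) u) (hcs : HasCompactSupport u) (hsub : tsupport u ⊆ OmegaT θ)

include hθ hu hcs hsub

lemma part2 :
    0 ≤ ∫ p : ℝ × ℝ, (‖fderiv ℝ u p (0, 1)‖ ^ 2 - ‖u p‖ ^ 2
        - (TriT θ).indicator (fun q => (π ^ 2 / (π - q.2 / 4) ^ 2 - 1) * ‖u q‖ ^ 2) p) := by
  obtain ⟨hθ0, hθ2⟩ := hθ
  have hπ : (0:ℝ) < π := Real.pi_pos
  have hsin : 0 < Real.sin θ := Real.sin_pos_of_pos_of_lt_pi hθ0 (by linarith)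
  have hcos : 0 < Real.cos θ := Real.cos_pos_of_mem_Ioo ⟨by linarith, hθ2⟩
  have htan : 0 < Real.tan θ := Real.tan_pos_of_pos_of_lt_pi_div_two hθ0 hθ2
  have hcot : 0 < Real.cot θ := by
    rw [Real.cot_eq_cos_div_sin]; positivity
  have hct : Real.cot θ * Real.tan θ = 1 := by
    rw [Real.cot_eq_cos_div_sin, Real.tan_eq_sin_div_cos]; field_simp
  have hucont : Continuous u := hu.continuous
  have hdiff : Differentiable ℝ u := hu.differentiable (by simp)
  have hfdcont : Continuous (fderiv ℝ u) := hu.continuous_fderiv (by simp)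
  have hu0 : ∀ p ∉ tsupport u, u p = 0 := fun p hp => image_eq_zero_of_notMem_tsupport hp
  have hfd0 : ∀ p ∉ tsupport u, fderiv ℝ u p = 0 := by
    intro p hp
    by_contra h
    exact hp (support_fderiv_subset ℝ (Function.mem_support.2 h))
  -- membership helper
  have hmemkey : ∀ {s t : ℝ}, (s, t) ∈ OmegaT θ → -s * Real.tan θ < t := by
    intro s t hst
    obtain ⟨h0, hπ', hsl⟩ := hst
    simp only at hsl h0 hπ'
    have h1 : -s < t * Real.cot θ := by linarith
    have h2 : -s * Real.tan θ < t * Real.cot θ * Real.tan θ :=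
      mul_lt_mul_of_pos_right h1 htan
    calc -s * Real.tan θ < t * Real.cot θ * Real.tan θ := h2
      _ = t := by rw [mul_assoc, hct, mul_one]
  set B : ℝ × ℝ → ℝ := fun p => ‖fderiv ℝ u p (0, 1)‖ ^ 2 with hB
  set D : ℝ × ℝ → ℝ := fun p => ‖u p‖ ^ 2 with hD
  set E : ℝ × ℝ → ℝ := fun q => (π ^ 2 / (π - q.2 / 4) ^ 2 - 1) * ‖u q‖ ^ 2 with hE
  set Ind : ℝ × ℝ → ℝ := fun p => (TriT θ).indicator E p with hInd
  have hBcont : Continuous B := by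
    have : Continuous (fun p => fderiv ℝ u p (0, 1)) :=
      (ContinuousLinearMap.apply ℝ ℂ ((0:ℝ), (1:ℝ))).continuous.comp hfdcont
    exact this.norm.pow 2
  have hDcont : Continuous D := hucont.norm.pow 2
  have hEcont : Continuous E := by
    rw [continuous_iff_continuousAt]
    intro p
    by_cases hp : p ∈ tsupport u
    · have hΩ := hsub hp
      have hden : (π - p.2 / 4) ≠ 0 := by
        have h2 := hΩ.2.1
        have h1 := hΩ.1
        have : 0 < π - p.2 / 4 := by linarith
        exact this.ne'
      apply ContinuousAt.mul
      · exact (ContinuousAt.div continuousAt_const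
          (((continuous_const.sub (continuous_snd.div_const 4)).pow 2).continuousAt)
          (pow_ne_zero 2 hden)).sub continuousAt_const
      · exact (hucont.norm.pow 2).continuousAt
    · have hev : E =ᶠ[nhds p] (fun _ => (0:ℝ)) := by
        filter_upwards [(isClosed_tsupport u).isOpen_compl.mem_nhds hp] with q hq
        rw [hE]; simp only; rw [hu0 q hq]; simp
      exact ContinuousAt.congr continuousAt_const hev.symm
  have hcsB : HasCompactSupport B := by
    apply HasCompactSupport.intro hcs
    intro p hp; rw [hB]; simp only; rw [hfd0 p hp]; simp
  have hcsD : HasCompactSupport D := by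
    apply HasCompactSupport.intro hcs
    intro p hp; rw [hD]; simp only; rw [hu0 p hp]; simp
  have hcsE : HasCompactSupport E := by
    apply HasCompactSupport.intro hcs
    intro p hp; rw [hE]; simp only; rw [hu0 p hp]; simp
  have hintB : Integrable B := hBcont.integrable_of_hasCompactSupport hcsB
  have hintD : Integrable D := hDcont.integrable_of_hasCompactSupport hcsD
  have hintE : Integrable E := hEcont.integrable_of_hasCompactSupport hcsE
  have hintInd : Integrable Ind := hintE.indicator (triT_open θ).measurableSet
  have hint : Integrable (fun p : ℝ × ℝ => B p - D p - Ind p) := (hintB.sub hintD).sub hintInd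
  have hswap : ∫ p : ℝ × ℝ, (B p - D p - Ind p)
      = ∫ s : ℝ, ∫ t : ℝ, (B (s, t) - D (s, t) - Ind (s, t)) :=
    MeasureTheory.integral_prod _ hint
  rw [show (∫ p : ℝ × ℝ, (‖fderiv ℝ u p (0, 1)‖ ^ 2 - ‖u p‖ ^ 2
      - (TriT θ).indicator (fun q => (π ^ 2 / (π - q.2 / 4) ^ 2 - 1) * ‖u q‖ ^ 2) p))
      = ∫ p : ℝ × ℝ, (B p - D p - Ind p) from rfl]
  rw [hswap]
  apply integral_nonneg
  intro s
  simp only [Pi.zero_apply]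
  -- slice functions in t
  set w : ℝ → ℂ := fun t => u (s, t) with hw
  set w' : ℝ → ℂ := fun t => fderiv ℝ u (s, t) (0, 1) with hw'
  have hwd : ∀ t, HasDerivAt w (w' t) t := by
    intro t
    have hline : HasDerivAt (fun t : ℝ => ((s, t) : ℝ × ℝ)) ((0:ℝ), (1:ℝ)) t :=
      (hasDerivAt_const t s).prodMk (hasDerivAt_id t)
    exact (hdiff (s, t)).hasFDerivAt.comp_hasDerivAt t hline
  have hw'c : Continuous w' := by
    have h1 : Continuous (fun t : ℝ => fderiv ℝ u (s, t)) :=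
      hfdcont.comp (continuous_const.prodMk continuous_id)
    exact ((ContinuousLinearMap.apply ℝ ℂ ((0:ℝ), (1:ℝ))).continuous.comp h1)
  have hKt : IsCompact (Prod.snd '' tsupport u) := hcs.image continuous_snd
  have hnotK : ∀ t : ℝ, t ∉ Prod.snd '' tsupport u → (s, t) ∉ tsupport u :=
    fun t ht hmem => ht ⟨(s, t), hmem, rfl⟩
  have hcsw : HasCompactSupport w := by
    apply HasCompactSupport.intro hKt
    intro t ht
    exact hu0 (s, t) (hnotK t ht)
  -- slice integrabilities
  have hintBs : Integrable (fun t => B (s, t)) := by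
    apply Continuous.integrable_of_hasCompactSupport
    · exact hBcont.comp (continuous_const.prodMk continuous_id)
    · apply HasCompactSupport.intro hKt
      intro t ht; rw [hB]; simp only; rw [hfd0 _ (hnotK t ht)]; simp
  have hintDs : Integrable (fun t => D (s, t)) := by
    apply Continuous.integrable_of_hasCompactSupport
    · exact hDcont.comp (continuous_const.prodMk continuous_id)
    · apply HasCompactSupport.intro hKt
      intro t ht; rw [hD]; simp only; rw [hu0 _ (hnotK t ht)]; simp
  have hintEs : Integrable (fun t => E (s, t)) := by
    apply Continuous.integrable_of_hasCompactSupport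
    · exact hEcont.comp (continuous_const.prodMk continuous_id)
    · apply HasCompactSupport.intro hKt
      intro t ht; rw [hE]; simp only; rw [hu0 _ (hnotK t ht)]; simp
  have hslmeas : MeasurableSet {t : ℝ | (s, t) ∈ TriT θ} := by
    have : IsOpen {t : ℝ | (s, t) ∈ TriT θ} :=
      (triT_open θ).preimage (continuous_const.prodMk continuous_id)
    exact this.measurableSet
  have hIndsl : (fun t => Ind (s, t))
      = fun t => Set.indicator {t' : ℝ | (s, t') ∈ TriT θ} (fun t' => E (s, t')) t := by
    funext t
    simp only [hInd]
    by_cases h : (s, t) ∈ TriT θ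
    · rw [Set.indicator_of_mem h, Set.indicator_of_mem (show t ∈ {t' : ℝ | (s, t') ∈ TriT θ} from h)]
    · rw [Set.indicator_of_notMem h,
        Set.indicator_of_notMem (show t ∉ {t' : ℝ | (s, t') ∈ TriT θ} from h)]
  have hintInds : Integrable (fun t => Ind (s, t)) := by
    rw [hIndsl]
    exact hintEs.indicator hslmeas
  -- case split on whether the slice vanishes
  by_cases hw0 : ∀ t, w t = 0
  · have hw'0 : ∀ t, w' t = 0 := by
      intro t
      exact (hwd t).unique ((hasDerivAt_const t (0:ℂ)).congr_of_eventuallyEq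
        (Filter.Eventually.of_forall (fun y => hw0 y)))
    have : (fun t => B (s, t) - D (s, t) - Ind (s, t)) = fun _ => (0:ℝ) := by
      funext t
      have hwt := hw0 t
      have hw't := hw'0 t
      simp only [hw] at hwt
      simp only [hw'] at hw't
      have hB0 : B (s, t) = 0 := by simp only [hB, hw't]; simp
      have hD0 : D (s, t) = 0 := by simp only [hD, hwt]; simp
      have hE0 : E (s, t) = 0 := by simp only [hE, hwt]; simp
      have hInd0 : Ind (s, t) = 0 := by
        simp only [hInd]
        by_cases h : (s, t) ∈ TriT θ
        · rw [Set.indicator_of_mem h]; exact hE0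
        · rw [Set.indicator_of_notMem h]
      rw [hB0, hD0, hInd0]; ring
    rw [this, integral_zero]
  · push_neg at hw0
    obtain ⟨t₀, ht₀⟩ := hw0
    have ht₀Ω : (s, t₀) ∈ OmegaT θ := hsub (subset_tsupport u (Function.mem_support.2 ht₀))
    set aS : ℝ := max 0 (-s * Real.tan θ) with haS
    have haSπ : aS < π := by
      rw [haS]
      apply max_lt hπ
      calc -s * Real.tan θ < t₀ := hmemkey ht₀Ω
        _ < π := ht₀Ω.2.1
    have hsupw : tsupport w ⊆ Set.Ioo aS π := by
      have h1 : tsupport w ⊆ {t : ℝ | (s, t) ∈ tsupport u} := by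
        apply closure_minimal _ (IsClosed.preimage (continuous_const.prodMk continuous_id)
          (isClosed_tsupport u))
        intro t ht
        simp only [Function.mem_support] at ht
        exact subset_tsupport _ ht
      intro t ht
      have h2 := hsub (h1 ht)
      refine ⟨?_, h2.2.1⟩
      rw [haS]
      apply max_lt h2.1 (hmemkey h2)
    have hpoin := poincare1d aS π haSπ w w' hwd hw'c hcsw hsupw
    set kk : ℝ := (π / (π - aS)) ^ 2 with hkk
    have haS0 : 0 ≤ aS := le_max_left _ _
    have hπaS : 0 < π - aS := by linarith
    have hkk1 : 1 ≤ kk := by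
      rw [hkk]
      have h1 : 1 ≤ π / (π - aS) := (one_le_div hπaS).2 (by linarith)
      nlinarith
    -- pointwise bound : D + Ind ≤ kk * ‖w t‖²
    have hpw : ∀ t, D (s, t) + Ind (s, t) ≤ kk * ‖w t‖ ^ 2 := by
      intro t
      by_cases hwt : w t = 0
      · have hwt' : u (s, t) = 0 := hwt
        have hD0 : D (s, t) = 0 := by simp only [hD, hwt']; simp
        have hInd0 : Ind (s, t) = 0 := by
          simp only [hInd]
          by_cases h : (s, t) ∈ TriT θ
          · rw [Set.indicator_of_mem h]; simp only [hE, hwt']; simp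
          · rw [Set.indicator_of_notMem h]
        rw [hD0, hInd0, hwt]; simp
      · have htmem : t ∈ Set.Ioo aS π := hsupw (subset_tsupport w (Function.mem_support.2 hwt))
        have hDval : D (s, t) = ‖w t‖ ^ 2 := rfl
        by_cases h : (s, t) ∈ TriT θ
        · -- triangle case
          have hIval : Ind (s, t) = (π ^ 2 / (π - t / 4) ^ 2 - 1) * ‖w t‖ ^ 2 := by
            simp only [hInd]
            rw [Set.indicator_of_mem h]
          obtain ⟨hΩ', htri⟩ := h
          have ht0 : 0 < t := hΩ'.1
          have hs0 : s < 0 := by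
            have : -(t / 2 * Real.cot θ) / 2 < 0 := by
              have : 0 < t / 2 * Real.cot θ := by positivity
              linarith
            simp only at htri
            linarith [htri]
          have haSval : aS = -s * Real.tan θ := by
            rw [haS]
            apply max_eq_right
            nlinarith
          have ht4 : t / 4 ≤ aS := by
            rw [haSval]
            simp only at htri
            have h1 : s < -(t / 2 * Real.cot θ) / 2 := htri
            have h2 : t / 4 * Real.cot θ < -s := by linarith
            have h3 : t / 4 * Real.cot θ * Real.tan θ < -s * Real.tan θ :=
              mul_lt_mul_of_pos_right h2 htan
            have h4 : t / 4 * Real.cot θ * Real.tan θ = t / 4 := by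
              rw [mul_assoc, hct, mul_one]
            linarith
          have hden : 0 < π - t / 4 := by linarith
          have hcmp : π ^ 2 / (π - t / 4) ^ 2 ≤ kk := by
            rw [hkk, div_pow]
            apply div_le_div_of_nonneg_left (by positivity) (by positivity)
            have h1 : π - aS ≤ π - t / 4 := by linarith
            exact pow_le_pow_left₀ (le_of_lt hπaS) h1 2
          rw [hDval, hIval]
          have hnn : (0:ℝ) ≤ ‖w t‖ ^ 2 := by positivity
          have heq : ‖w t‖ ^ 2 + (π ^ 2 / (π - t / 4) ^ 2 - 1) * ‖w t‖ ^ 2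
              = (π ^ 2 / (π - t / 4) ^ 2) * ‖w t‖ ^ 2 := by ring
          rw [heq]
          exact mul_le_mul_of_nonneg_right hcmp hnn
        · have hIval : Ind (s, t) = 0 := by
            simp only [hInd]
            rw [Set.indicator_of_notMem h]
          rw [hDval, hIval, add_zero]
          have hnn : (0:ℝ) ≤ ‖w t‖ ^ 2 := by positivity
          nth_rewrite 1 [← one_mul (‖w t‖ ^ 2)]
          exact mul_le_mul_of_nonneg_right hkk1 hnn
    -- combine
    have hintkk : Integrable (fun t => kk * ‖w t‖ ^ 2) := by
      have : (fun t => kk * ‖w t‖ ^ 2) = fun t => kk * D (s, t) := rfl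
      rw [this]
      exact hintDs.const_mul kk
    have hintDI : Integrable (fun t => D (s, t) + Ind (s, t)) := hintDs.add hintInds
    have hmono : ∫ t, (D (s, t) + Ind (s, t)) ≤ ∫ t, kk * ‖w t‖ ^ 2 :=
      integral_mono hintDI hintkk hpw
    have hceq : ∫ t, kk * ‖w t‖ ^ 2 = kk * ∫ t, ‖w t‖ ^ 2 := integral_const_mul _ _
    have hBeq : ∫ t, B (s, t) = ∫ t, ‖w' t‖ ^ 2 := rfl
    have hsplit : ∫ t, (B (s, t) - D (s, t) - Ind (s, t))
        = (∫ t, B (s, t)) - ∫ t, (D (s, t) + Ind (s, t)) := by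
      rw [← integral_sub hintBs hintDI]
      congr 1
      funext t
      ring
    rw [hsplit]
    have h1 : ∫ t, (D (s, t) + Ind (s, t)) ≤ ∫ t, B (s, t) := by
      calc ∫ t, (D (s, t) + Ind (s, t)) ≤ kk * ∫ t, ‖w t‖ ^ 2 := by rw [← hceq]; exact hmono
        _ ≤ ∫ t, ‖w' t‖ ^ 2 := hpoin
        _ = ∫ t, B (s, t) := hBeq.symm
    linarith

end Main2

/-- Local Hardy inequality for the full quadratic form `h_θ` at critical flux. -/
theorem local_hardy (θ : ℝ) (hθ : θ ∈ Set.Ioo 0 (π / 2)) :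
    ∀ u : ℝ × ℝ → ℂ,
      ContDiff ℝ (⊤ : ℕ∞) u → HasCompactSupport u → tsupport u ⊆ OmegaT θ →
      (∫ p in OmegaT θ, (‖fderiv ℝ u p (1, 0)‖ ^ 2 + ‖fderiv ℝ u p (0, 1)‖ ^ 2
          - ‖u p‖ ^ 2 / (4 * (p.1 + p.2 * Real.cot θ) ^ 2)))
        - (∫ p in OmegaT θ, ‖u p‖ ^ 2)
      ≥ ∫ p in TriT θ, (π ^ 2 / (π - p.2 / 4) ^ 2 - 1) * ‖u p‖ ^ 2 := by
  intro u hu hcs hsub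
  have hucont : Continuous u := hu.continuous
  have hfdcont : Continuous (fderiv ℝ u) := hu.continuous_fderiv (by simp)
  have hu0 : ∀ p ∉ tsupport u, u p = 0 := fun p hp => image_eq_zero_of_notMem_tsupport hp
  have hfd0 : ∀ p ∉ tsupport u, fderiv ℝ u p = 0 := by
    intro p hp
    by_contra h
    exact hp (support_fderiv_subset ℝ (Function.mem_support.2 h))
  set A : ℝ × ℝ → ℝ := fun p => ‖fderiv ℝ u p (1, 0)‖ ^ 2 with hA
  set B : ℝ × ℝ → ℝ := fun p => ‖fderiv ℝ u p (0, 1)‖ ^ 2 with hB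
  set C : ℝ × ℝ → ℝ := fun p => ‖u p‖ ^ 2 / (4 * (p.1 + p.2 * Real.cot θ) ^ 2) with hC
  set D : ℝ × ℝ → ℝ := fun p => ‖u p‖ ^ 2 with hD
  set E : ℝ × ℝ → ℝ := fun q => (π ^ 2 / (π - q.2 / 4) ^ 2 - 1) * ‖u q‖ ^ 2 with hE
  set Ind : ℝ × ℝ → ℝ := fun p => (TriT θ).indicator E p with hInd
  -- continuity of A, B, C, D
  have hAcont : Continuous A :=
    (((ContinuousLinearMap.apply ℝ ℂ ((1:ℝ), (0:ℝ))).continuous.comp hfdcont).norm.pow 2)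
  have hBcont : Continuous B :=
    (((ContinuousLinearMap.apply ℝ ℂ ((0:ℝ), (1:ℝ))).continuous.comp hfdcont).norm.pow 2)
  have hDcont : Continuous D := hucont.norm.pow 2
  have hCcont : Continuous C := by
    rw [continuous_iff_continuousAt]
    intro p
    by_cases hp : p ∈ tsupport u
    · have hΩ := hsub hp
      have hρ : 0 < p.1 + p.2 * Real.cot θ := by nlinarith [hΩ.2.2]
      exact ((hucont.norm.pow 2).continuousAt).div (by fun_prop) (by positivity)
    · have hev : C =ᶠ[nhds p] (fun _ => (0:ℝ)) := by
        filter_upwards [(isClosed_tsupport u).isOpen_compl.mem_nhds hp] with q hq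
        rw [hC]; simp only; rw [hu0 q hq]; simp
      exact ContinuousAt.congr continuousAt_const hev.symm
  have hEcont : Continuous E := by
    rw [continuous_iff_continuousAt]
    intro p
    by_cases hp : p ∈ tsupport u
    · have hΩ := hsub hp
      have hπ : (0:ℝ) < π := Real.pi_pos
      have hden : (π - p.2 / 4) ≠ 0 := by
        have h2 := hΩ.2.1
        have h1 := hΩ.1
        have : 0 < π - p.2 / 4 := by
          linarith
        exact this.ne'
      apply ContinuousAt.mul
      · exact (ContinuousAt.div continuousAt_const
          (((continuous_const.sub (continuous_snd.div_const 4)).pow 2).continuousAt)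
          (pow_ne_zero 2 hden)).sub continuousAt_const
      · exact (hucont.norm.pow 2).continuousAt
    · have hev : E =ᶠ[nhds p] (fun _ => (0:ℝ)) := by
        filter_upwards [(isClosed_tsupport u).isOpen_compl.mem_nhds hp] with q hq
        rw [hE]; simp only; rw [hu0 q hq]; simp
      exact ContinuousAt.congr continuousAt_const hev.symm
  -- compact supports and integrability
  have hcsA : HasCompactSupport A := by
    apply HasCompactSupport.intro hcs
    intro p hp; rw [hA]; simp only; rw [hfd0 p hp]; simp
  have hcsB : HasCompactSupport B := by
    apply HasCompactSupport.intro hcs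
    intro p hp; rw [hB]; simp only; rw [hfd0 p hp]; simp
  have hcsC : HasCompactSupport C := by
    apply HasCompactSupport.intro hcs
    intro p hp; rw [hC]; simp only; rw [hu0 p hp]; simp
  have hcsD : HasCompactSupport D := by
    apply HasCompactSupport.intro hcs
    intro p hp; rw [hD]; simp only; rw [hu0 p hp]; simp
  have hcsE : HasCompactSupport E := by
    apply HasCompactSupport.intro hcs
    intro p hp; rw [hE]; simp only; rw [hu0 p hp]; simp
  have hintA : Integrable A := hAcont.integrable_of_hasCompactSupport hcsA
  have hintB : Integrable B := hBcont.integrable_of_hasCompactSupport hcsB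
  have hintC : Integrable C := hCcont.integrable_of_hasCompactSupport hcsC
  have hintD : Integrable D := hDcont.integrable_of_hasCompactSupport hcsD
  have hintE : Integrable E := hEcont.integrable_of_hasCompactSupport hcsE
  have hintInd : Integrable Ind := hintE.indicator (triT_open θ).measurableSet
  -- vanishing off Ω
  have hnotΩ : ∀ p ∉ OmegaT θ, p ∉ tsupport u := fun p hp hmem => hp (hsub hmem)
  have h1 : ∫ p in OmegaT θ, (A p + B p - C p) = ∫ p, (A p + B p - C p) := by
    apply setIntegral_eq_integral_of_forall_compl_eq_zero
    intro p hp
    have hnm := hnotΩ p hp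
    have hA0 : A p = 0 := by rw [hA]; simp only; rw [hfd0 p hnm]; simp
    have hB0 : B p = 0 := by rw [hB]; simp only; rw [hfd0 p hnm]; simp
    have hC0 : C p = 0 := by rw [hC]; simp only; rw [hu0 p hnm]; simp
    rw [hA0, hB0, hC0]; ring
  have h2 : ∫ p in OmegaT θ, D p = ∫ p, D p := by
    apply setIntegral_eq_integral_of_forall_compl_eq_zero
    intro p hp
    rw [hD]; simp only; rw [hu0 p (hnotΩ p hp)]; simp
  have h3 : ∫ p in TriT θ, E p = ∫ p, Ind p :=
    (integral_indicator (triT_open θ).measurableSet).symm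
  have hintAC : Integrable (fun p : ℝ × ℝ => A p - C p) := hintA.sub hintC
  have hintBD : Integrable (fun p : ℝ × ℝ => B p - D p) := hintB.sub hintD
  have h4 : ∫ p, (A p + B p - C p) = (∫ p, (A p - C p)) + ∫ p, B p := by
    rw [← integral_add hintAC hintB]
    congr 1
    funext p
    ring
  have h5 : ∫ p, (B p - D p - Ind p) = ((∫ p, B p) - ∫ p, D p) - ∫ p, Ind p := by
    rw [integral_sub hintBD hintInd, integral_sub hintB hintD]
  have hp1 := part1 hθ hu hcs hsub
  have hp2 := part2 hθ hu hcs hsub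
  have hp1' : 0 ≤ ∫ p, (A p - C p) := hp1
  have hp2' : 0 ≤ ∫ p, (B p - D p - Ind p) := hp2
  rw [h5] at hp2'
  have hgoal : (∫ p in OmegaT θ, (‖fderiv ℝ u p (1, 0)‖ ^ 2 + ‖fderiv ℝ u p (0, 1)‖ ^ 2
      - ‖u p‖ ^ 2 / (4 * (p.1 + p.2 * Real.cot θ) ^ 2)))
      = ∫ p in OmegaT θ, (A p + B p - C p) := rfl
  rw [ge_iff_le, hgoal, h1, h4]
  have h2' : (∫ p in OmegaT θ, ‖u p‖ ^ 2) = ∫ p, D p := h2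
  have h3' : (∫ p in TriT θ, (π ^ 2 / (π - p.2 / 4) ^ 2 - 1) * ‖u p‖ ^ 2) = ∫ p, Ind p := h3
  rw [h2', h3']
  linarith
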